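/- Let k ≥ 7 be odd, let G be a graph on n vertices containing no odd cycle of length less than k, fix a k-cycle v_0v_1…v_{k−1} in G with vertex set C and good sequences D_j (0 ≤ j ≤ k−1), and for a vertex w define its contribution c(w) = (1/2)·|{j : w ∈ A_1(D_j)}| + ∑_{i=2}^{k−1} |{j : w ∈ A_i(D_j)}|. If w has exactly two neighbors in C, then c(w) = k − 1. -/

import Mathlib

/-!
As `G` has no odd cycle shorter than `k`, it has no odd closed walk shorter than `k`; closing a
walk between two vertices of `C` along one of the two arcs of `C` therefore controls their
distance on `C`. Hence `C` is induced, the two neighbours of `w` on `C` are some `v_α, v_{α+2}`,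
and `w` looks to `C` exactly like `v_{α+1}`. So `w ∈ A_1(D_j)` iff `j ∈ {α, α+2}`, while for each
`2 ≤ i ≤ k-1` exactly one `j` has `w ∈ A_i(D_j)`, namely `α - 2`, `α - 1`, `α + 1 - i` and `α + 2`
for `i = 2`, `i = 3`, `4 ≤ i ≤ k-2` and `i = k-1`: for `i ≥ 4`, the induced path or cycle of `D_j`
through `w` is the one along `C` with `v_{α+1}` replaced by `w`. Thus `c(w) = 1 + (k - 2)`.
-/

/-- `f` realizes a cycle of length `ℓ` in `G`: an injective map from `ZMod ℓ` whose
consecutive images are adjacent. -/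
def IsCycleMap {V : Type*} (G : SimpleGraph V) {ℓ : ℕ} (f : ZMod ℓ → V) : Prop :=
  Function.Injective f ∧ ∀ i, G.Adj (f i) (f (i + 1))

/-- `G` contains no odd cycle of length less than `k`. -/
def NoShortOddCycle {V : Type*} (G : SimpleGraph V) (k : ℕ) : Prop :=
  ∀ ℓ : ℕ, Odd ℓ → 3 ≤ ℓ → ℓ < k → ∀ f : ZMod ℓ → V, ¬ IsCycleMap G f

/-- The good sequence associated to the cycle `f = (v_0, v_1, …, v_{k-1})`:
the entries `v_2` and `v_3` are swapped. -/
def goodOfCycle {V : Type*} {k : ℕ} (f : ZMod k → V) : ZMod k → V :=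
  fun i => if i = 2 then f 3 else if i = 3 then f 2 else f i

/-- `z` is a good sequence in `G`: it arises from some `k`-cycle of `G`
(quantifying over all cycle maps accounts for all `2k` rotations and reflections). -/
def IsGoodSeq {V : Type*} (G : SimpleGraph V) {k : ℕ} (z : ZMod k → V) : Prop :=
  ∃ f : ZMod k → V, IsCycleMap G f ∧ z = goodOfCycle f

/-- The vertex sequence `z₀, z₁, z₃, z₂, z₄, …, z_{i-1}, w` (indices `0, …, i`,
with the final entry `w` at index `i`). -/
def seqAt {V : Type*} {k : ℕ} (z : ZMod k → V) (w : V) (i : ℕ) : ℕ → V :=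
  fun a => if a = i then w else if a = 2 then z 3 else if a = 3 then z 2 else z (a : ZMod k)

/-- `q 0, q 1, …, q i` is an induced path in `G`. -/
def IsInducedPathOn {V : Type*} (G : SimpleGraph V) (q : ℕ → V) (i : ℕ) : Prop :=
  (∀ a b, a ≤ i → b ≤ i → q a = q b → a = b) ∧
  (∀ a b, a ≤ i → b ≤ i → (G.Adj (q a) (q b) ↔ (b = a + 1 ∨ a = b + 1)))

/-- `q 0, q 1, …, q (k-1)` is an induced cycle in `G`. -/
def IsInducedCycleOn {V : Type*} (G : SimpleGraph V) (q : ℕ → V) (k : ℕ) : Prop :=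
  (∀ a b, a < k → b < k → q a = q b → a = b) ∧
  (∀ a b, a < k → b < k →
    (G.Adj (q a) (q b) ↔
      ((b = a + 1 ∨ a = b + 1) ∨ (a = 0 ∧ b = k - 1) ∨ (b = 0 ∧ a = k - 1))))

/-- The set `A_i(D)` for the good sequence `D = z` (of a graph `G` without odd cycles of
length less than `k`). -/
def Aset {V : Type*} (G : SimpleGraph V) (k : ℕ) (z : ZMod k → V) (i : ℕ) : Set V :=
  if i = 0 then Set.univ
  else if i = 1 then G.neighborSet (z 0)
  else if i = 2 then {w | w ∉ G.neighborSet (z 0) ∧ G.dist (z 1) w = 2}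
  else if i = 3 then G.neighborSet (z 1) ∩ G.neighborSet (z 2)
  else if i = k - 1 then {w | IsInducedCycleOn G (seqAt z w (k - 1)) k}
  else {w | IsInducedPathOn G (seqAt z w i) i}

/-- The weight `w(D) = ∏_{i=0}^{k-1} |A_i(D)|⁻¹` of a good sequence `D = z`. -/
noncomputable def weight {V : Type*} (G : SimpleGraph V) (k : ℕ) (z : ZMod k → V) : ℝ :=
  ∏ i ∈ Finset.range k, ((Nat.card ↥(Aset G k z i) : ℝ))⁻¹

/-- The good sequence `D_j = (v_j, v_{j+1}, v_{j+3}, v_{j+2}, v_{j+4}, …, v_{j+k-1})`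
associated to the cycle `f = (v_0, …, v_{k-1})` (indices mod `k`). -/
def goodRot {V : Type*} {k : ℕ} (f : ZMod k → V) (j : ZMod k) : ZMod k → V :=
  goodOfCycle (fun i => f (j + i))

/-- The contribution of a vertex `w` to the sum `∑_j (n_{1,j}/2 + ∑_{i=2}^{k-1} n_{i,j})`
for the cycle `f`:
`c(w) = (1/2)·|{j : w ∈ A_1(D_j)}| + ∑_{i=2}^{k-1} |{j : w ∈ A_i(D_j)}|`. -/
noncomputable def contrib {V : Type*} (G : SimpleGraph V) (k : ℕ) (f : ZMod k → V)
    (w : V) : ℝ :=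
  (1 / 2) * (Nat.card ↥{j : ZMod k | w ∈ Aset G k (goodRot f j) 1} : ℝ) +
    ∑ i ∈ Finset.Icc 2 (k - 1),
      (Nat.card ↥{j : ZMod k | w ∈ Aset G k (goodRot f j) i} : ℝ)


open SimpleGraph

section

variable {V : Type*} {G : SimpleGraph V} {k : ℕ}

namespace ZMod

lemma natCast_ne_zero_of_lt {c : ℕ} (h0 : 0 < c) (h : c < k) : (c : ZMod k) ≠ 0 := by
  rw [Ne, natCast_eq_zero_iff]
  exact Nat.not_dvd_of_pos_of_lt h0 h

lemma natCast_ne_zero_of_even (hodd : Odd k) {c : ℕ} (h0 : 0 < c) (he : Even c)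
    (h : c < 2 * k) : (c : ZMod k) ≠ 0 := by
  rw [Ne, natCast_eq_zero_iff]
  rintro ⟨m, rfl⟩
  obtain ⟨n, rfl⟩ := (Nat.even_mul.1 he).resolve_left (Nat.not_even_iff_odd.2 hodd)
  rcases n with _ | n
  · simp at h0
  · nlinarith

lemma natCast_eq_natCast_iff_of_lt {a b : ℕ} (ha : a < k) (hb : b < k) :
    (a : ZMod k) = b ↔ a = b := by
  rw [natCast_eq_natCast_iff', Nat.mod_eq_of_lt ha, Nat.mod_eq_of_lt hb]

lemma natCast_eq_natCast_add_one_iff {a b : ℕ} (ha : a < k) (hb : b < k) :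
    (b : ZMod k) = a + 1 ↔ b = a + 1 ∨ b = 0 ∧ a = k - 1 := by
  rw [← Nat.cast_succ, natCast_eq_natCast_iff', Nat.mod_eq_of_lt hb]
  rcases (Nat.succ_le_of_lt ha).lt_or_eq with h | h
  · rw [Nat.mod_eq_of_lt h]; omega
  · rw [h, Nat.mod_self]; omega

end ZMod

theorem isCycleMap_comp_val {ℓ : ℕ} (hℓ : 1 < ℓ) {g : ℕ → V} (hinj : Set.InjOn g (Set.Iio ℓ))
    (hg : ∀ i < ℓ, G.Adj (g i) (g (i + 1))) (hclosed : g ℓ = g 0) :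
    IsCycleMap G (g ∘ ZMod.val : ZMod ℓ → V) := by
  have : NeZero ℓ := ⟨by omega⟩
  have : Fact (1 < ℓ) := ⟨hℓ⟩
  refine ⟨fun i j h => ZMod.val_injective ℓ (hinj (ZMod.val_lt i) (ZMod.val_lt j) h), fun i => ?_⟩
  have hv : (i + 1).val = (i.val + 1) % ℓ := by rw [ZMod.val_add, ZMod.val_one]
  simp only [Function.comp_apply, hv]
  obtain h | h : i.val + 1 < ℓ ∨ i.val + 1 = ℓ := by have := ZMod.val_lt i; omega
  · exact (Nat.mod_eq_of_lt h).symm ▸ hg _ (ZMod.val_lt i)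
  · rw [h, Nat.mod_self, ← hclosed]
    simpa only [h] using hg _ (ZMod.val_lt i)

theorem NoShortOddCycle.even_of_closed_walk (hG : NoShortOddCycle G k) {ℓ : ℕ} (hℓ : ℓ < k)
    (g : ℕ → V) (hg : ∀ i < ℓ, G.Adj (g i) (g (i + 1))) (hclosed : g ℓ = g 0) : Even ℓ := by
  induction ℓ using Nat.strong_induction_on generalizing g with
  | _ ℓ ih =>
  by_contra hodd
  rw [Nat.not_even_iff_odd] at hodd
  by_cases hinj : Set.InjOn g (Set.Iio ℓ)
  · obtain rfl | hℓ3 : ℓ = 1 ∨ 3 ≤ ℓ := by obtain ⟨m, rfl⟩ := hodd; omega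
    · exact G.irrefl (hclosed ▸ hg 0 one_pos)
    exact hG ℓ hodd hℓ3 hℓ _ (isCycleMap_comp_val (by omega) hinj hg hclosed)
  · obtain ⟨s, t, hst, htℓ, hgst⟩ : ∃ s t, s < t ∧ t < ℓ ∧ g s = g t := by
      simp only [Set.InjOn, Set.mem_Iio, not_forall] at hinj
      obtain ⟨s, hs, t, ht, h, hne⟩ := hinj
      rcases lt_or_gt_of_ne hne with h' | h'
      exacts [⟨s, t, h', ht, h⟩, ⟨t, s, h', hs, h.symm⟩]
    -- splitting at the repeated vertex gives closed walks of lengths `t - s` and `ℓ - (t - s)`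
    obtain hodd' | hodd' : Odd (t - s) ∨ Odd (ℓ - (t - s)) := by
      simp only [Nat.odd_iff] at hodd ⊢; omega
    · refine Nat.not_even_iff_odd.2 hodd' (ih (t - s) (by omega) (by omega) (fun a => g (s + a))
        (fun i hi => by simpa only [add_assoc] using hg (s + i) (by omega)) ?_)
      simp only [add_zero, Nat.add_sub_cancel' hst.le, hgst]
    · refine Nat.not_even_iff_odd.2 hodd' (ih (ℓ - (t - s)) (by omega) (by omega)
        (fun a => if a ≤ s then g a else g (a + (t - s))) (fun i hi => ?_) ?_)
      · rcases lt_trichotomy i s with h | rfl | h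
        · simp only [if_pos h.le, if_pos (Nat.succ_le_of_lt h)]
          exact hg i (by omega)
        · simp only [le_refl, if_true, if_neg (Nat.not_succ_le_self i)]
          rw [hgst, show i + 1 + (t - i) = t + 1 by omega]
          exact hg t htℓ
        · simp only [if_neg (by omega : ¬ i ≤ s), if_neg (by omega : ¬ i + 1 ≤ s)]
          rw [show i + 1 + (t - s) = i + (t - s) + 1 by omega]
          exact hg _ (by omega)
      · simp only [if_neg (by omega : ¬ ℓ - (t - s) ≤ s), zero_le, if_true,
          Nat.sub_add_cancel (by omega : t - s ≤ ℓ), hclosed]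

namespace IsCycleMap

variable {f : ZMod k → V}

theorem even_length_add_val_sub (hG : NoShortOddCycle G k) (hf : IsCycleMap G f) {a b : ZMod k}
    (p : G.Walk (f a) (f b)) (hlt : p.length + (a - b).val < k) :
    Even (p.length + (a - b).val) := by
  have : NeZero k := ⟨by omega⟩
  -- close `p` up by walking along the cycle from `f b` to `f a`
  refine hG.even_of_closed_walk hlt
    (fun i => if i ≤ p.length then p.getVert i else f (b + ((i - p.length : ℕ) : ZMod k)))
    (fun i _ => ?_) ?_
  · rcases lt_trichotomy i p.length with h | rfl | h
    · simp only [if_pos h.le, if_pos (Nat.succ_le_of_lt h)]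
      exact p.adj_getVert_succ h
    · simpa [Walk.getVert_length] using hf.2 b
    · simp only [if_neg (by omega : ¬ i ≤ p.length), if_neg (by omega : ¬ i + 1 ≤ p.length),
        Nat.sub_add_comm h.le, Nat.cast_succ, ← add_assoc]
      exact hf.2 _
  · simp only [zero_le, if_true, Walk.getVert_zero]
    split_ifs with h
    · have hab : a = b := sub_eq_zero.1 ((ZMod.val_eq_zero _).1 (by omega))
      simp [hab, Walk.getVert_length]
    · simp

theorem exists_eq_add_of_walk (hG : NoShortOddCycle G k) (hodd : Odd k) (hf : IsCycleMap G f)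
    {a b : ZMod k} (p : G.Walk (f a) (f b)) (hlt : p.length < k) :
    ∃ r ≤ p.length, Even (p.length + r) ∧ (b = a + r ∨ a = b + r) := by
  have : NeZero k := ⟨by omega⟩
  by_cases hab : a = b
  · subst hab
    exact ⟨0, Nat.zero_le _, by simpa using hf.even_length_add_val_sub hG p (by simpa using hlt),
      by simp⟩
  have hsum : (a - b).val + (b - a).val = k := by
    rw [← neg_sub a b, ZMod.neg_val, if_neg (sub_ne_zero.2 hab)]
    have := (a - b).val_lt
    omega
  have hrev := hf.even_length_add_val_sub hG p.reverse
  have hfwd := hf.even_length_add_val_sub hG p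
  rw [Walk.length_reverse] at hrev
  simp only [Nat.even_iff] at hrev hfwd ⊢
  obtain ⟨n, rfl⟩ := hodd
  by_cases he : (p.length + (a - b).val) % 2 = 0
  · refine ⟨(a - b).val, ?_, he, Or.inr (by rw [ZMod.natCast_zmod_val]; ring)⟩
    by_contra hle
    have := hrev (by omega)
    omega
  · refine ⟨(b - a).val, ?_, by omega, Or.inl (by rw [ZMod.natCast_zmod_val]; ring)⟩
    by_contra hle
    exact he (hfwd (by omega))

theorem adj_iff (hG : NoShortOddCycle G k) (hodd : Odd k) (hk : 3 ≤ k) (hf : IsCycleMap G f)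
    {s t : ZMod k} : G.Adj (f s) (f t) ↔ t = s + 1 ∨ s = t + 1 := by
  refine ⟨fun h => ?_, ?_⟩
  · obtain ⟨r, hr, he, hst⟩ :=
      hf.exists_eq_add_of_walk hG hodd (.cons h .nil)
        (by simp only [Walk.length_cons, Walk.length_nil]; omega)
    simp only [Walk.length_cons, Walk.length_nil] at hr he
    interval_cases r
    · exact absurd he (by decide)
    · simpa using hst
  · rintro (rfl | rfl)
    exacts [hf.2 s, (hf.2 t).symm]

theorem eq_add_two_of_adj_of_adj (hG : NoShortOddCycle G k) (hodd : Odd k) (hk : 3 ≤ k)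
    (hf : IsCycleMap G f) {w : V} {a b : ZMod k} (ha : G.Adj w (f a)) (hb : G.Adj w (f b))
    (hab : a ≠ b) : b = a + 2 ∨ a = b + 2 := by
  obtain ⟨r, hr, he, h⟩ :=
    hf.exists_eq_add_of_walk hG hodd (.cons ha.symm (.cons hb .nil))
      (by simp only [Walk.length_cons, Walk.length_nil]; omega)
  simp only [Walk.length_cons, Walk.length_nil] at hr he
  interval_cases r
  · simp only [Nat.cast_zero, add_zero] at h
    exact absurd (h.elim Eq.symm id) hab
  · exact absurd he (by decide)
  · simpa using h

theorem eq_add_one_or_eq_add_three_of_walk (hG : NoShortOddCycle G k) (hodd : Odd k)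
    (hk : 4 ≤ k) (hf : IsCycleMap G f) {a b : ZMod k} (p : G.Walk (f a) (f b))
    (hp : p.length = 3) : b = a + 1 ∨ a = b + 1 ∨ b = a + 3 ∨ a = b + 3 := by
  obtain ⟨r, hr, he, h⟩ := hf.exists_eq_add_of_walk hG hodd p (by omega)
  rw [hp] at hr he
  interval_cases r
  · exact absurd he (by decide)
  · push_cast at h; tauto
  · exact absurd he (by decide)
  · push_cast at h; tauto

theorem adj_natCast_iff (hG : NoShortOddCycle G k) (hodd : Odd k) (hk : 3 ≤ k)
    (hf : IsCycleMap G f) (j : ZMod k) {a b : ℕ} (ha : a < k) (hb : b < k) :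
    G.Adj (f (j + a)) (f (j + b)) ↔
      (b = a + 1 ∨ a = b + 1) ∨ (a = 0 ∧ b = k - 1) ∨ (b = 0 ∧ a = k - 1) := by
  rw [hf.adj_iff hG hodd hk, add_assoc, add_assoc, add_right_inj, add_right_inj,
    ZMod.natCast_eq_natCast_add_one_iff ha hb, ZMod.natCast_eq_natCast_add_one_iff hb ha]
  omega

theorem isInducedCycleOn (hG : NoShortOddCycle G k) (hodd : Odd k) (hk : 3 ≤ k)
    (hf : IsCycleMap G f) (j : ZMod k) : IsInducedCycleOn G (fun a => f (j + a)) k :=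
  ⟨fun _ _ ha hb h => (ZMod.natCast_eq_natCast_iff_of_lt ha hb).1 (add_left_cancel (hf.1 h)),
    fun _ _ ha hb => hf.adj_natCast_iff hG hodd hk j ha hb⟩

theorem isInducedPathOn (hG : NoShortOddCycle G k) (hodd : Odd k) (hk : 3 ≤ k)
    (hf : IsCycleMap G f) (j : ZMod k) {n : ℕ} (hn : n + 1 < k) :
    IsInducedPathOn G (fun a => f (j + a)) n :=
  ⟨fun a b _ _ => (hf.isInducedCycleOn hG hodd hk j).1 a b (by omega) (by omega),
    fun a b _ _ => by rw [hf.adj_natCast_iff hG hodd hk j (by omega) (by omega)]; omega⟩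

end IsCycleMap

section Aset

variable {z : ZMod k → V} {w : V}

theorem mem_Aset_one : w ∈ Aset G k z 1 ↔ G.Adj (z 0) w := by
  simp [Aset]

theorem mem_Aset_two : w ∈ Aset G k z 2 ↔ ¬ G.Adj (z 0) w ∧ G.dist (z 1) w = 2 := by
  simp [Aset]

theorem mem_Aset_three : w ∈ Aset G k z 3 ↔ G.Adj (z 1) w ∧ G.Adj (z 2) w := by
  simp [Aset]

theorem mem_Aset_of_four_le {i : ℕ} (hi : 4 ≤ i) (hik : i ≠ k - 1) :
    w ∈ Aset G k z i ↔ IsInducedPathOn G (seqAt z w i) i := by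
  simp [Aset, hik, show i ≠ 0 by omega, show i ≠ 1 by omega, show i ≠ 2 by omega,
    show i ≠ 3 by omega]

theorem mem_Aset_sub_one (hk : 5 ≤ k) :
    w ∈ Aset G k z (k - 1) ↔ IsInducedCycleOn G (seqAt z w (k - 1)) k := by
  simp [Aset, show k - 1 ≠ 0 by omega, show k - 1 ≠ 1 by omega, show k - 1 ≠ 2 by omega,
    show k - 1 ≠ 3 by omega]

end Aset

section goodRot

variable (f : ZMod k → V) (j : ZMod k)

theorem goodRot_natCast (hk : 4 ≤ k) {a : ℕ} (ha : a < k) (h2 : a ≠ 2) (h3 : a ≠ 3) :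
    goodRot f j a = f (j + a) := by
  have h2' : (a : ZMod k) ≠ 2 := by
    exact_mod_cast (ZMod.natCast_eq_natCast_iff_of_lt ha (by omega : 2 < k)).not.2 h2
  have h3' : (a : ZMod k) ≠ 3 := by
    exact_mod_cast (ZMod.natCast_eq_natCast_iff_of_lt ha (by omega : 3 < k)).not.2 h3
  simp [goodRot, goodOfCycle, h2', h3']

theorem goodRot_zero (hk : 4 ≤ k) : goodRot f j 0 = f j := by
  simpa using goodRot_natCast f j hk (a := 0) (by omega) (by omega) (by omega)

theorem goodRot_one (hk : 4 ≤ k) : goodRot f j 1 = f (j + 1) := by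
  simpa using goodRot_natCast f j hk (a := 1) (by omega) (by omega) (by omega)

theorem goodRot_two : goodRot f j 2 = f (j + 3) := by
  simp [goodRot, goodOfCycle]

theorem goodRot_three (hk : 4 ≤ k) : goodRot f j 3 = f (j + 2) := by
  have h : (3 : ZMod k) ≠ 2 := by
    exact_mod_cast (ZMod.natCast_eq_natCast_iff_of_lt (by omega : 3 < k) (by omega : 2 < k)).not.2
      (by omega)
  simp [goodRot, goodOfCycle, h]

theorem seqAt_goodRot (hk : 4 ≤ k) (w : V) {i a : ℕ} (ha : a < k) (hai : a ≠ i) :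
    seqAt (goodRot f j) w i a = f (j + a) := by
  unfold seqAt
  rw [if_neg hai]
  split_ifs with h2 h3
  · subst h2; simpa using goodRot_three f j hk
  · subst h3; simpa [add_comm] using goodRot_two f j
  · exact goodRot_natCast f j hk ha h2 h3

theorem seqAt_self (z : ZMod k → V) (w : V) (i : ℕ) : seqAt z w i i = w := by
  simp [seqAt]

end goodRot

structure AttachedAt (G : SimpleGraph V) (f : ZMod k → V) (w : V) (α : ZMod k) : Prop where
  adj_iff : ∀ t, G.Adj w (f t) ↔ t = α ∨ t = α + 2
  eq_add_one_of_eq : ∀ c, w = f c → c = α + 1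

variable {f : ZMod k → V} {w : V}

theorem IsCycleMap.exists_attachedAt (hG : NoShortOddCycle G k) (hodd : Odd k) (hk : 3 ≤ k)
    (hf : IsCycleMap G f) (hw : Nat.card {i : ZMod k | G.Adj w (f i)} = 2) :
    ∃ α, AttachedAt G f w α := by
  rw [Nat.card_coe_set_eq, Set.ncard_eq_two] at hw
  obtain ⟨a, b, hab, hS⟩ := hw
  have hadj : ∀ t, G.Adj w (f t) ↔ t = a ∨ t = b := fun t => by
    simpa using Set.ext_iff.1 hS t
  wlog h : b = a + 2 generalizing a b
  · have h' := (hf.eq_add_two_of_adj_of_adj hG hodd hk ((hadj a).2 (.inl rfl))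
      ((hadj b).2 (.inr rfl)) hab).resolve_left h
    exact this b a hab.symm (by rwa [Set.pair_comm]) (fun t => (hadj t).trans or_comm) h'
  subst h
  refine ⟨a, hadj, fun c hc => ?_⟩
  have h2 : ((2 : ℕ) : ZMod k) ≠ 0 := ZMod.natCast_ne_zero_of_even hodd two_pos even_two (by omega)
  have h4 : ((4 : ℕ) : ZMod k) ≠ 0 :=
    ZMod.natCast_ne_zero_of_even hodd (by norm_num) (by decide) (by omega)
  have hp := (hadj (c + 1)).1 (hc ▸ hf.2 c)
  have hm := (hadj (c - 1)).1 (hc ▸ by simpa using (hf.2 (c - 1)).symm)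
  rcases hp with hp | hp
  · rcases hm with hm | hm
    · exact absurd (by linear_combination hp - hm) h2
    · exact absurd (by linear_combination hp - hm) h4
  · linear_combination hp

namespace AttachedAt

variable {α : ZMod k}

theorem adj_iff_adj (hα : AttachedAt G f w α) (hG : NoShortOddCycle G k) (hodd : Odd k)
    (hk : 3 ≤ k) (hf : IsCycleMap G f) (t : ZMod k) :
    G.Adj w (f t) ↔ G.Adj (f (α + 1)) (f t) := by
  rw [hα.adj_iff, hf.adj_iff hG hodd hk, add_assoc, one_add_one_eq_two, add_left_inj, eq_comm,
    or_comm]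

/-- `seqAt (goodRot f j) w i` is `a ↦ f (j + a)` with the entry `f (j + i) = f (α + 1)` replaced
by `w`, which is indistinguishable from it as seen from the cycle. -/
theorem seqAt_goodRot_iff (hα : AttachedAt G f w α) (hG : NoShortOddCycle G k) (hodd : Odd k)
    (hk : 4 ≤ k) (hf : IsCycleMap G f) {i : ℕ} (hi : i < k) {j : ZMod k} (hj : j + i = α + 1)
    {a b : ℕ} (ha : a < k) (hb : b < k) :
    (seqAt (goodRot f j) w i a = seqAt (goodRot f j) w i b ↔ f (j + a) = f (j + b)) ∧
      (G.Adj (seqAt (goodRot f j) w i a) (seqAt (goodRot f j) w i b) ↔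
        G.Adj (f (j + a)) (f (j + b))) := by
  have key : ∀ b < k, b ≠ i → (w = f (j + b) ↔ f (j + i) = f (j + b)) ∧
      (G.Adj w (f (j + b)) ↔ G.Adj (f (j + i)) (f (j + b))) := fun b hb hbi => by
    have hne : j + b ≠ α + 1 := fun h =>
      hbi ((ZMod.natCast_eq_natCast_iff_of_lt hb hi).1 (add_left_cancel (h.trans hj.symm)))
    rw [hj]
    exact ⟨iff_of_false (fun h => hne (hα.eq_add_one_of_eq _ h)) (fun h => hne (hf.1 h).symm),
      hα.adj_iff_adj hG hodd (by omega) hf _⟩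
  by_cases hai : a = i <;> by_cases hbi : b = i
  · subst hai hbi; simp
  · subst hai
    rw [seqAt_self, seqAt_goodRot f j hk w hb hbi]
    exact key b hb hbi
  · subst hbi
    rw [seqAt_self, seqAt_goodRot f j hk w ha hai, eq_comm, G.adj_comm, eq_comm (a := f _),
      G.adj_comm (f _)]
    exact key a ha hai
  · rw [seqAt_goodRot f j hk w ha hai, seqAt_goodRot f j hk w hb hbi]
    exact ⟨Iff.rfl, Iff.rfl⟩

theorem isInducedPathOn_seqAt_goodRot (hα : AttachedAt G f w α) (hG : NoShortOddCycle G k)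
    (hodd : Odd k) (hk : 4 ≤ k) (hf : IsCycleMap G f) {i : ℕ} (hi : i + 1 < k) {j : ZMod k}
    (hj : j + i = α + 1) : IsInducedPathOn G (seqAt (goodRot f j) w i) i := by
  obtain ⟨hinj, hadj⟩ := hf.isInducedPathOn hG hodd (by omega) j hi
  have h := fun {a b} (ha : a ≤ i) (hb : b ≤ i) =>
    hα.seqAt_goodRot_iff hG hodd hk hf (by omega) hj (a := a) (b := b) (by omega) (by omega)
  exact ⟨fun a b ha hb e => hinj a b ha hb ((h ha hb).1.1 e),
    fun a b ha hb => (h ha hb).2.trans (hadj a b ha hb)⟩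

theorem isInducedCycleOn_seqAt_goodRot (hα : AttachedAt G f w α) (hG : NoShortOddCycle G k)
    (hodd : Odd k) (hk : 4 ≤ k) (hf : IsCycleMap G f) {j : ZMod k}
    (hj : j + (k - 1 : ℕ) = α + 1) : IsInducedCycleOn G (seqAt (goodRot f j) w (k - 1)) k := by
  obtain ⟨hinj, hadj⟩ := hf.isInducedCycleOn hG hodd (by omega) j
  have h := fun {a b} (ha : a < k) (hb : b < k) =>
    hα.seqAt_goodRot_iff hG hodd hk hf (by omega) hj ha hb
  exact ⟨fun a b ha hb e => hinj a b ha hb ((h ha hb).1.1 e),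
    fun a b ha hb => (h ha hb).2.trans (hadj a b ha hb)⟩

theorem setOf_mem_Aset_one (hα : AttachedAt G f w α) (hk : 4 ≤ k) :
    {j | w ∈ Aset G k (goodRot f j) 1} = {α, α + 2} := by
  ext j
  simp [mem_Aset_one, goodRot_zero f j hk, G.adj_comm _ w, hα.adj_iff]

theorem dist_sub_one_eq_two (hα : AttachedAt G f w α) (hodd : Odd k) (hk : 4 ≤ k)
    (hf : IsCycleMap G f) : G.dist (f (α - 1)) w = 2 := by
  have h1 : ((1 : ℕ) : ZMod k) ≠ 0 := ZMod.natCast_ne_zero_of_lt one_pos (by omega)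
  have h2 : ((2 : ℕ) : ZMod k) ≠ 0 := ZMod.natCast_ne_zero_of_even hodd two_pos even_two (by omega)
  have h3 : ((3 : ℕ) : ZMod k) ≠ 0 := ZMod.natCast_ne_zero_of_lt (by norm_num) (by omega)
  have hα1 : G.Adj (f (α - 1)) (f α) := by simpa using hf.2 (α - 1)
  have hα0 : G.Adj (f α) w := ((hα.adj_iff α).2 (.inl rfl)).symm
  have hne0 : G.dist (f (α - 1)) w ≠ 0 := by
    rw [Ne, dist_eq_zero_iff_eq_or_not_reachable, not_or, not_not]
    exact ⟨fun h => h2 (by linear_combination -(hα.eq_add_one_of_eq _ h.symm)),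
      ⟨.cons hα1 (.cons hα0 .nil)⟩⟩
  have hne1 : G.dist (f (α - 1)) w ≠ 1 := by
    rw [Ne, dist_eq_one_iff_adj, G.adj_comm, hα.adj_iff]
    rintro (h | h)
    · exact h1 (by linear_combination -h)
    · exact h3 (by linear_combination -h)
  have hle := dist_le (.cons hα1 (.cons hα0 .nil))
  simp only [Walk.length_cons, Walk.length_nil] at hle
  omega

theorem setOf_mem_Aset_two (hα : AttachedAt G f w α) (hG : NoShortOddCycle G k) (hodd : Odd k)
    (hk : 5 ≤ k) (hf : IsCycleMap G f) : {j | w ∈ Aset G k (goodRot f j) 2} = {α - 2} := by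
  have h2 : ((2 : ℕ) : ZMod k) ≠ 0 := ZMod.natCast_ne_zero_of_even hodd two_pos even_two (by omega)
  have h4 : ((4 : ℕ) : ZMod k) ≠ 0 :=
    ZMod.natCast_ne_zero_of_even hodd (by norm_num) (by decide) (by omega)
  have h6 : ((6 : ℕ) : ZMod k) ≠ 0 :=
    ZMod.natCast_ne_zero_of_even hodd (by norm_num) (by decide) (by omega)
  have h8 : ((8 : ℕ) : ZMod k) ≠ 0 :=
    ZMod.natCast_ne_zero_of_even hodd (by norm_num) (by decide) (by omega)
  ext j
  simp only [Set.mem_ofPred_eq, mem_Aset_two, goodRot_zero f j (by omega : 4 ≤ k),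
    goodRot_one f j (by omega : 4 ≤ k), G.adj_comm _ w, hα.adj_iff, Set.mem_singleton_iff]
  constructor
  · rintro ⟨hnadj, hdist⟩
    obtain ⟨p, hp⟩ := exists_walk_of_dist_ne_zero (hdist ▸ two_ne_zero)
    -- extend a shortest `f (j + 1)`-`w` path by an edge to a neighbour of `w` on the cycle
    have three := fun {c} (hc : G.Adj w (f c)) => hf.eq_add_one_or_eq_add_three_of_walk hG hodd
      (by omega) (p.concat hc) (by rw [Walk.length_concat, hp, hdist])
    rcases three ((hα.adj_iff α).2 (.inl rfl)) with e | e | e | e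
    · linear_combination -e
    · exact absurd (.inl (by linear_combination e)) hnadj
    · rcases three ((hα.adj_iff (α + 2)).2 (.inr rfl)) with e' | e' | e' | e'
      · exact absurd (by linear_combination e' - e) h4
      · exact absurd (by linear_combination -e' - e) h6
      · exact absurd (by linear_combination e' - e) h2
      · exact absurd (by linear_combination -e' - e) h8
    · exact absurd (.inr (by linear_combination e)) hnadj
  · rintro rfl
    refine ⟨?_, by
      rw [show α - 2 + 1 = α - 1 by ring]; exact hα.dist_sub_one_eq_two hodd (by omega) hf⟩
    rintro (h | h)
    · exact h2 (by linear_combination -h)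
    · exact h4 (by linear_combination -h)

theorem setOf_mem_Aset_three (hα : AttachedAt G f w α) (hodd : Odd k) (hk : 4 ≤ k) :
    {j | w ∈ Aset G k (goodRot f j) 3} = {α - 1} := by
  have h2 : ((2 : ℕ) : ZMod k) ≠ 0 := ZMod.natCast_ne_zero_of_even hodd two_pos even_two (by omega)
  have h4 : ((4 : ℕ) : ZMod k) ≠ 0 :=
    ZMod.natCast_ne_zero_of_even hodd (by norm_num) (by decide) (by omega)
  ext j
  simp only [Set.mem_ofPred_eq, mem_Aset_three, goodRot_one f j hk, goodRot_two, G.adj_comm _ w,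
    hα.adj_iff, Set.mem_singleton_iff]
  constructor
  · rintro ⟨h1 | h1, h3 | h3⟩
    · exact absurd (by linear_combination h3 - h1) h2
    · linear_combination h1
    · exact absurd (by linear_combination h3 - h1) h4
    · exact absurd (by linear_combination h3 - h1) h2
  · rintro rfl
    exact ⟨.inl (by ring), .inr (by ring)⟩

theorem setOf_mem_Aset_of_four_le (hα : AttachedAt G f w α) (hG : NoShortOddCycle G k)
    (hodd : Odd k) (hf : IsCycleMap G f) {i : ℕ} (hi : 4 ≤ i) (hik : i + 2 ≤ k) :
    {j | w ∈ Aset G k (goodRot f j) i} = {α + 1 - i} := by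
  ext j
  rw [Set.mem_ofPred_eq, mem_Aset_of_four_le hi (by omega), Set.mem_singleton_iff]
  constructor
  · rintro ⟨-, hadj⟩
    have h1 := (hadj (i - 1) i (by omega) le_rfl).2 (.inl (by omega))
    have h3 := (hadj (i - 3) i (by omega) le_rfl).not.2 (by omega)
    rw [seqAt_self, seqAt_goodRot f j (by omega) w (by omega) (by omega), G.adj_comm,
      hα.adj_iff] at h1 h3
    push_cast [Nat.cast_sub (by omega : 1 ≤ i), Nat.cast_sub (by omega : 3 ≤ i)] at h1 h3
    rcases h1 with h1 | h1
    · linear_combination h1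
    · exact absurd (.inl (by linear_combination h1)) h3
  · rintro rfl
    exact hα.isInducedPathOn_seqAt_goodRot hG hodd (by omega) hf (by omega) (by ring)

theorem setOf_mem_Aset_sub_one (hα : AttachedAt G f w α) (hG : NoShortOddCycle G k)
    (hodd : Odd k) (hk : 5 ≤ k) (hf : IsCycleMap G f) :
    {j | w ∈ Aset G k (goodRot f j) (k - 1)} = {α + 2} := by
  have h2 : ((2 : ℕ) : ZMod k) ≠ 0 := ZMod.natCast_ne_zero_of_even hodd two_pos even_two (by omega)
  have h4 : ((4 : ℕ) : ZMod k) ≠ 0 :=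
    ZMod.natCast_ne_zero_of_even hodd (by norm_num) (by decide) (by omega)
  have hk1 : ((k - 1 : ℕ) : ZMod k) = -1 := by simp [Nat.cast_sub (by omega : 1 ≤ k)]
  have hk2 : ((k - 2 : ℕ) : ZMod k) = -2 := by simp [Nat.cast_sub (by omega : 2 ≤ k)]
  ext j
  rw [Set.mem_ofPred_eq, mem_Aset_sub_one hk, Set.mem_singleton_iff]
  constructor
  · rintro ⟨-, hadj⟩
    have h0 := (hadj 0 (k - 1) (by omega) (by omega)).2 (.inr (.inl ⟨rfl, rfl⟩))
    have h2' := (hadj (k - 2) (k - 1) (by omega) (by omega)).2 (.inl (.inl (by omega)))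
    rw [seqAt_self, seqAt_goodRot f j (by omega) w (by omega) (by omega), G.adj_comm,
      hα.adj_iff] at h0 h2'
    rw [hk2] at h2'
    simp only [Nat.cast_zero, add_zero] at h0
    rcases h2' with e | e
    · linear_combination e
    · rcases h0 with e' | e'
      · exact absurd (by linear_combination e' - e) h4
      · exact absurd (by linear_combination e' - e) h2
  · rintro rfl
    exact hα.isInducedCycleOn_seqAt_goodRot hG hodd (by omega) hf (by rw [hk1]; ring)

theorem card_setOf_mem_Aset (hα : AttachedAt G f w α) (hG : NoShortOddCycle G k) (hodd : Odd k)
    (hk : 5 ≤ k) (hf : IsCycleMap G f) {i : ℕ} (hi : 2 ≤ i) (hik : i ≤ k - 1) :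
    Nat.card {j | w ∈ Aset G k (goodRot f j) i} = 1 := by
  obtain rfl | rfl | ⟨hi4, hik'⟩ | rfl : i = 2 ∨ i = 3 ∨ (4 ≤ i ∧ i + 2 ≤ k) ∨ i = k - 1 := by
    omega
  · simp [hα.setOf_mem_Aset_two hG hodd hk hf]
  · simp [hα.setOf_mem_Aset_three hodd (by omega)]
  · simp [hα.setOf_mem_Aset_of_four_le hG hodd hf hi4 hik']
  · simp [hα.setOf_mem_Aset_sub_one hG hodd hk hf]

end AttachedAt

end

theorem contrib_of_two_neighbors_general {V : Type*} (k : ℕ) (hodd : Odd k)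
    (hk : 7 ≤ k) (G : SimpleGraph V) (hG : NoShortOddCycle G k)
    (f : ZMod k → V) (hf : IsCycleMap G f) (w : V)
    (hw : Nat.card ↥{i : ZMod k | G.Adj w (f i)} = 2) :
    contrib G k f w = (k : ℝ) - 1 := by
  obtain ⟨α, hα⟩ := hf.exists_attachedAt hG hodd (by omega) hw
  have hα2 : α ≠ α + 2 := fun h => ZMod.natCast_ne_zero_of_even hodd two_pos even_two (by omega)
    (by linear_combination -h)
  have hA1 : Nat.card {j | w ∈ Aset G k (goodRot f j) 1} = 2 := by
    rw [hα.setOf_mem_Aset_one (by omega), Nat.card_coe_set_eq, Set.ncard_pair hα2]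
  have hAi : ∀ i ∈ Finset.Icc 2 (k - 1),
      (Nat.card {j | w ∈ Aset G k (goodRot f j) i} : ℝ) = 1 := fun i hi => by
    rw [Finset.mem_Icc] at hi
    rw [hα.card_setOf_mem_Aset hG hodd (by omega) hf hi.1 hi.2, Nat.cast_one]
  rw [contrib, hA1, Finset.sum_congr rfl hAi, Finset.sum_const, Nat.card_Icc, nsmul_one,
    show k - 1 + 1 - 2 = k - 2 by omega, Nat.cast_sub (by omega)]
  push_cast
  ring

/-- If a vertex `w` has exactly two neighbours on the `k`-cycle `f`, then its contribution
equals `k - 1`. -/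
theorem contrib_of_two_neighbors {V : Type*} [Fintype V] (k : ℕ) (hodd : Odd k)
    (hk : 7 ≤ k) (G : SimpleGraph V) (hG : NoShortOddCycle G k)
    (f : ZMod k → V) (hf : IsCycleMap G f) (w : V)
    (hw : Nat.card ↥{i : ZMod k | G.Adj w (f i)} = 2) :
    contrib G k f w = (k : ℝ) - 1 :=
  contrib_of_two_neighbors_general k hodd hk G hG f hf w hw
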